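/- Let G be a DAG with single source and single sink, and let u, v be vertices such that u is neither an ancestor nor a descendant of v. Let G' be obtained from G by adding edge (u,v). If l(u) + r(v) ≤ len(G), where l(u) is the maximum length of a path from the source to u, r(v) is the maximum length of a path from v to the sink, and len(G) is the maximum length of a source-to-sink path, then len(G') = len(G). -/

import Mathlib

/-!
Split a longest path of the augmented graph at its first use of the new edge `(u,v)`: the part
before is an old path ending at `u`. If the rest never reuses the new edge, it is an old path from
`v`, and the whole path has length at most `l(u) + r(v) ≤ len(G)`. Reusing it would require an old
path from `v` back to `u`, which only exists when `u = v` and the new edge is a loop; then a loop of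
positive weight can be traversed once more, giving a longer path, while a loop of weight zero can
be cut out, giving a shorter path of the same length to which induction applies.
-/

/-- A path in a directed graph `E` from vertex `a` to vertex `b`, given as the
list of its vertices, consecutively connected by edges. -/
def IsPathFromTo {V : Type*} (E : V → V → Prop) (a b : V) (p : List V) : Prop :=
  p.Chain' E ∧ p.head? = some a ∧ p.getLast? = some b

/-- The length of a path: the sum of the weights of its vertices. -/
def plen {V : Type*} (c : V → ℝ) (p : List V) : ℝ := (p.map c).sum

def addEdge {V : Type*} (E : V → V → Prop) (u v : V) : V → V → Prop :=
  fun a b => E a b ∨ (a = u ∧ b = v)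

@[simp]
lemma plen_append {V : Type*} (c : V → ℝ) (p q : List V) :
    plen c (p ++ q) = plen c p + plen c q := by
  simp [plen]

@[simp]
lemma plen_cons {V : Type*} (c : V → ℝ) (a : V) (p : List V) :
    plen c (a :: p) = c a + plen c p := by
  simp [plen]

namespace IsPathFromTo

variable {V : Type*} {R S : V → V → Prop} {a b b' d : V} {p q : List V}

lemma singleton_iff {x : V} : IsPathFromTo R a b [x] ↔ x = a ∧ x = b := by
  simp only [IsPathFromTo, List.head?_cons, List.getLast?_singleton, Option.some.injEq, eq_comm]
  exact ⟨fun h => h.2, fun h => ⟨List.isChain_singleton x, h⟩⟩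

lemma singleton : IsPathFromTo R a a [a] := singleton_iff.mpr ⟨rfl, rfl⟩

lemma cons_cons_iff {x y : V} {t : List V} :
    IsPathFromTo R a b (x :: y :: t) ↔ x = a ∧ R x y ∧ IsPathFromTo R y b (y :: t) := by
  change List.IsChain R (x :: y :: t) ∧ _ ↔ _ ∧ _ ∧ List.IsChain R (y :: t) ∧ _
  simp only [List.isChain_cons_cons, List.head?_cons, Option.some.injEq,
    List.getLast?_cons_cons, true_and]
  tauto

lemma mono (hRS : ∀ ⦃a b⦄, R a b → S a b) (hp : IsPathFromTo R a b p) :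
    IsPathFromTo S a b p :=
  ⟨List.IsChain.imp hRS hp.1, hp.2⟩

lemma append (hp : IsPathFromTo R a b p) (hq : IsPathFromTo R b' d q) (h : R b b') :
    IsPathFromTo R a d (p ++ q) := by
  obtain ⟨hpR, hpa, hpb⟩ := hp
  obtain ⟨hqR, hqb', hqd⟩ := hq
  refine ⟨hpR.append hqR (by simpa [hpb, hqb'] using h), ?_, ?_⟩
  · simp [List.head?_append, hpa]
  · simp [List.getLast?_append, hqd]

lemma cons (h : R a b) (hp : IsPathFromTo R b d p) : IsPathFromTo R a d (a :: p) :=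
  singleton.append hp h

lemma transGen_of_length_ne_one (hp : IsPathFromTo R a b p) (hlen : p.length ≠ 1) :
    Relation.TransGen R a b := by
  match p, hp with
  | [], hp => simp [IsPathFromTo] at hp
  | [_], _ => simp at hlen
  | x :: y :: t, hp =>
    obtain ⟨rfl, hxy, hyb⟩ := cons_cons_iff.mp hp
    refine .head' hxy (List.relationReflTransGen_of_exists_isChain_cons t hyb.1 ?_)
    simpa [List.getLast?_eq_some_getLast] using hyb.2.2

lemma eq_singleton_of_not_transGen (hp : IsPathFromTo R a b p)
    (hab : ¬ Relation.TransGen R a b) : p = [a] ∧ a = b := by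
  obtain ⟨x, rfl⟩ : ∃ x, p = [x] :=
    List.length_eq_one_iff.mp (not_not.mp fun h => hab (hp.transGen_of_length_ne_one h))
  obtain ⟨rfl, rfl⟩ := singleton_iff.mp hp
  exact ⟨rfl, rfl⟩

lemma split_addEdge {u v : V} (hp : IsPathFromTo (addEdge R u v) a b p) :
    IsPathFromTo R a b p ∨ ∃ p₁ p₂, p = p₁ ++ p₂ ∧ IsPathFromTo R a u p₁ ∧
      IsPathFromTo (addEdge R u v) v b p₂ := by
  induction p generalizing a with
  | nil => simp [IsPathFromTo] at hp
  | cons x t ih =>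
    cases t with
    | nil => exact .inl (singleton_iff.mpr (singleton_iff.mp hp))
    | cons y t =>
      obtain ⟨rfl, hxy | ⟨rfl, rfl⟩, hy⟩ := cons_cons_iff.mp hp
      · rcases ih hy with hyE | ⟨p₁, p₂, hsplit, hp₁, hp₂⟩
        · exact .inl (hyE.cons hxy)
        · exact .inr ⟨x :: p₁, p₂, by rw [hsplit, List.cons_append], hp₁.cons hxy, hp₂⟩
      · exact .inr ⟨[x], y :: t, rfl, singleton, hy⟩

end IsPathFromTo

lemma plen_le_or_exists_longer_addEdge {V : Type*} {E : V → V → Prop} {c : V → ℝ}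
    {src snk u v : V} {B : ℝ} (hc : ∀ w, 0 ≤ c w) (hvu : ¬ Relation.TransGen E v u)
    (hold : ∀ p, IsPathFromTo E src snk p → plen c p ≤ B)
    (hthrough : ∀ p₁ p₂, IsPathFromTo E src u p₁ → IsPathFromTo E v snk p₂ →
      plen c p₁ + plen c p₂ ≤ B)
    (p : List V) (hp : IsPathFromTo (addEdge E u v) src snk p) :
    plen c p ≤ B ∨ ∃ q, IsPathFromTo (addEdge E u v) src snk q ∧ plen c p < plen c q := by
  have hsub : ∀ ⦃a b⦄, E a b → addEdge E u v a b := fun _ _ => .inl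
  induction hn : p.length using Nat.strong_induction_on generalizing p with
  | _ n ih =>
  rcases hp.split_addEdge with hpE | ⟨p₁, p₂, rfl, hp₁, hp₂⟩
  · exact .inl (hold p hpE)
  rcases hp₂.split_addEdge with hp₂E | ⟨q₁, q₂, rfl, hq₁, hq₂⟩
  · exact .inl (by simpa using hthrough p₁ p₂ hp₁ hp₂E)
  obtain ⟨rfl, rfl⟩ := hq₁.eq_singleton_of_not_transGen hvu
  have hloop : addEdge E v v v v := .inr ⟨rfl, rfl⟩
  rcases (hc v).eq_or_lt with hzero | hpos
  · have hcut : IsPathFromTo (addEdge E v v) src snk (p₁ ++ q₂) := (hp₁.mono hsub).append hq₂ hloop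
    have hcut_len : plen c (p₁ ++ ([v] ++ q₂)) = plen c (p₁ ++ q₂) := by simp [← hzero]
    rw [hcut_len]
    exact ih _ (by simp [← hn]) _ hcut rfl
  · refine .inr ⟨p₁ ++ [v] ++ [v] ++ q₂, ?_, by simpa using hpos⟩
    exact ((((hp₁.mono hsub).append .singleton hloop).append .singleton hloop).append hq₂ hloop)

theorem stmt0_general {V : Type*}
    (E : V → V → Prop) (c : V → ℝ) (src snk u v : V)
    (hc : ∀ w, 0 ≤ c w)
    (hpar : ¬ Relation.TransGen E u v ∧ ¬ Relation.TransGen E v u)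
    (lu rv lenG lenG' : ℝ)
    (hlu : IsGreatest {x | ∃ p, IsPathFromTo E src u p ∧ plen c p = x} lu)
    (hrv : IsGreatest {x | ∃ p, IsPathFromTo E v snk p ∧ plen c p = x} rv)
    (hlen : IsGreatest {x | ∃ p, IsPathFromTo E src snk p ∧ plen c p = x} lenG)
    (hlen' : IsGreatest {x | ∃ p,
        IsPathFromTo (fun a b => E a b ∨ (a = u ∧ b = v)) src snk p ∧ plen c p = x} lenG')
    (hle : lu + rv ≤ lenG) :
    lenG' = lenG := by
  obtain ⟨p, hp, rfl⟩ := hlen'.1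
  have hold : ∀ q, IsPathFromTo E src snk q → plen c q ≤ lenG := fun q hq => hlen.2 ⟨q, hq, rfl⟩
  refine le_antisymm ?_ ?_
  · rcases plen_le_or_exists_longer_addEdge hc hpar.2 hold
      (fun p₁ p₂ hp₁ hp₂ => (add_le_add (hlu.2 ⟨p₁, hp₁, rfl⟩) (hrv.2 ⟨p₂, hp₂, rfl⟩)).trans hle)
      p hp with hle' | ⟨q, hq, hlt⟩
    · exact hle'
    · exact absurd (hlen'.2 ⟨q, hq, rfl⟩) hlt.not_ge
  · obtain ⟨q, hq, rfl⟩ := hlen.1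
    exact hlen'.2 ⟨q, hq.mono fun _ _ => .inl, rfl⟩

/-- Lemma 1: adding an edge `(u,v)` with `l(u) + r(v) ≤ len(G)` does not change
the longest path length. -/
theorem stmt0 {V : Type*} [Fintype V] [DecidableEq V]
    (E : V → V → Prop) (c : V → ℝ) (src snk u v : V)
    (hacyc : ∀ w, ¬ Relation.TransGen E w w)
    (hc : ∀ w, 0 ≤ c w)
    (hsrc : ∀ w, ¬ E w src) (hsnk : ∀ w, ¬ E snk w)
    (hpar : ¬ Relation.TransGen E u v ∧ ¬ Relation.TransGen E v u)
    (lu rv lenG lenG' : ℝ)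
    (hlu : IsGreatest {x | ∃ p, IsPathFromTo E src u p ∧ plen c p = x} lu)
    (hrv : IsGreatest {x | ∃ p, IsPathFromTo E v snk p ∧ plen c p = x} rv)
    (hlen : IsGreatest {x | ∃ p, IsPathFromTo E src snk p ∧ plen c p = x} lenG)
    (hlen' : IsGreatest {x | ∃ p,
        IsPathFromTo (fun a b => E a b ∨ (a = u ∧ b = v)) src snk p ∧ plen c p = x} lenG')
    (hle : lu + rv ≤ lenG) :
    lenG' = lenG :=
  stmt0_general E c src snk u v hc hpar lu rv lenG lenG' hlu hrv hlen hlen' hle
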